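/- arXiv:2509.23436 — 3 statements merged into one kernel-verified Lean document; each statement's English description precedes it below -/
import Mathlib

section
/- For discrete measures μ, ν supported on n and m points with marginals p¹, p², and any pivot measure σ with r atoms of strictly positive mass, the glued plan featured in LOT(μ,ν;σ) lies in the rank-constrained feasible set U(p¹, p², r); consequently LrOT_r(μ,ν) ≤ LOT(μ,ν;σ) for every such σ, and hence LrOT_r(μ,ν) ≤ LOT_r(μ,ν) = inf_σ LOT(μ,ν;σ). -/
open Matrix Finset

/-- Transportation polytope `U(α,β)`. -/
def TransportPolytope {a b : ℕ} (α : Fin a → ℝ) (β : Fin b → ℝ) :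
    Set (Matrix (Fin a) (Fin b) ℝ) :=
  {Γ | (∀ i j, 0 ≤ Γ i j) ∧ (∀ i, ∑ j, Γ i j = α i) ∧ (∀ j, ∑ i, Γ i j = β j)}

/-- Nonnegative rank at most `r`. -/
def NonnegRankLE {a b : ℕ} (A : Matrix (Fin a) (Fin b) ℝ) (r : ℕ) : Prop :=
  ∃ (u : Fin r → Fin a → ℝ) (w : Fin r → Fin b → ℝ),
    (∀ t i, 0 ≤ u t i) ∧ (∀ t j, 0 ≤ w t j) ∧
    (∀ i j, A i j = ∑ t, u t i * w t j)

/-- Entropy `H(Γ) = −Σ Γ_{ab}(log Γ_{ab} − 1)`. -/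
noncomputable def MatEntropy {a b : ℕ} (Γ : Matrix (Fin a) (Fin b) ℝ) : ℝ :=
  -∑ i, ∑ j, Γ i j * (Real.log (Γ i j) - 1)

/-- Entropic transport objective `Σ C_{ij} Γ_{ij} − ε H(Γ)`. -/
noncomputable def EOTObj {a b : ℕ} (C Γ : Matrix (Fin a) (Fin b) ℝ) (ε : ℝ) : ℝ :=
  (∑ i, ∑ j, C i j * Γ i j) - ε * MatEntropy Γ

lemma xlogx_lb {x : ℝ} (hx : 0 ≤ x) : -1 ≤ x * (Real.log x - 1) := by
  rcases eq_or_lt_of_le hx with h | h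
  · simp [← h]
  · have := Real.one_sub_inv_le_log_of_pos h
    have h2 : x * (1 - x⁻¹) ≤ x * Real.log x := by
      exact mul_le_mul_of_nonneg_left this hx
    have h3 : x * (1 - x⁻¹) = x - 1 := by field_simp
    nlinarith

lemma EOTObj_lb {a b : ℕ} (C : Matrix (Fin a) (Fin b) ℝ) (ε : ℝ) (hε : 0 ≤ ε)
    (Γ : Matrix (Fin a) (Fin b) ℝ) (hΓ : ∀ i j, 0 ≤ Γ i j)
    (hΓ1 : ∀ i j, Γ i j ≤ 1) :
    (-∑ i, ∑ j, |C i j|) - ε * (a * b) ≤ EOTObj C Γ ε := by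
  have h1 : -∑ i, ∑ j, |C i j| ≤ ∑ i, ∑ j, C i j * Γ i j := by
    rw [← Finset.sum_neg_distrib]
    refine Finset.sum_le_sum fun i _ => ?_
    rw [← Finset.sum_neg_distrib]
    refine Finset.sum_le_sum fun j _ => ?_
    calc -|C i j| = -|C i j| * 1 := by ring
    _ ≤ C i j * Γ i j := by
        rcases le_or_gt 0 (C i j) with h | h
        · have : (0:ℝ) ≤ C i j * Γ i j := mul_nonneg h (hΓ i j)
          nlinarith [abs_nonneg (C i j)]
        · rw [abs_of_neg h]
          nlinarith [hΓ i j, hΓ1 i j]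
  have h2 : MatEntropy Γ ≤ (a : ℝ) * b := by
    unfold MatEntropy
    have : -((a:ℝ) * b) ≤ ∑ i, ∑ j, Γ i j * (Real.log (Γ i j) - 1) := by
      calc -((a:ℝ) * b) = ∑ _i : Fin a, ∑ _j : Fin b, (-1 : ℝ) := by
            simp [mul_comm]
      _ ≤ _ := by
            refine Finset.sum_le_sum fun i _ => Finset.sum_le_sum fun j _ => ?_
            exact xlogx_lb (hΓ i j)
    linarith
  have h3 : ε * MatEntropy Γ ≤ ε * (a * b) := mul_le_mul_of_nonneg_left h2 hε
  unfold EOTObj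
  linarith

/-- the glued plan appearing in `LOT(μ,ν;σ)` is feasible for the
rank-constrained problem `LrOT_r`, hence `LrOT_r(μ,ν) ≤ LOT(μ,ν;σ)` for every
pivot measure `σ` (and therefore `LrOT_r(μ,ν) ≤ LOT_r(μ,ν) = inf_σ LOT(μ,ν;σ)`). -/
theorem LrOT_le_LOT
    (n m r d : ℕ)
    (x : Fin n → Fin d → ℝ) (y : Fin m → Fin d → ℝ) (z : Fin r → Fin d → ℝ)
    (c : (Fin d → ℝ) → (Fin d → ℝ) → ℝ)
    (ε : ℝ) (hε : 0 ≤ ε)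
    (p1 : Fin n → ℝ) (p2 : Fin m → ℝ) (p0 : Fin r → ℝ)
    (hp1 : ∀ i, 0 < p1 i) (hp2 : ∀ j, 0 < p2 j) (hp0 : ∀ t, 0 < p0 t)
    (hp1s : ∑ i, p1 i = 1) (hp2s : ∑ j, p2 j = 1) (hp0s : ∑ t, p0 t = 1)
    (Γ1 : Matrix (Fin r) (Fin n) ℝ) (Γ2 : Matrix (Fin r) (Fin m) ℝ)
    (hΓ1mem : Γ1 ∈ TransportPolytope p0 p1)
    (hΓ2mem : Γ2 ∈ TransportPolytope p0 p2)
    (hΓ1opt : ∀ Γ' ∈ TransportPolytope p0 p1,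
      EOTObj (Matrix.of fun t i => c (z t) (x i)) Γ1 ε ≤
        EOTObj (Matrix.of fun t i => c (z t) (x i)) Γ' ε)
    (hΓ2opt : ∀ Γ' ∈ TransportPolytope p0 p2,
      EOTObj (Matrix.of fun t j => c (z t) (y j)) Γ2 ε ≤
        EOTObj (Matrix.of fun t j => c (z t) (y j)) Γ' ε) :
    Γ1ᵀ * Matrix.diagonal (fun t => (p0 t)⁻¹) * Γ2 ∈ TransportPolytope p1 p2 ∧
    NonnegRankLE (Γ1ᵀ * Matrix.diagonal (fun t => (p0 t)⁻¹) * Γ2) r ∧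
    sInf ((fun Γ => EOTObj (Matrix.of fun i j => c (x i) (y j)) Γ ε) ''
        {Γ ∈ TransportPolytope p1 p2 | NonnegRankLE Γ r}) ≤
      EOTObj (Matrix.of fun i j => c (x i) (y j))
        (Γ1ᵀ * Matrix.diagonal (fun t => (p0 t)⁻¹) * Γ2) ε := by
  obtain ⟨h1n, h1r, h1c⟩ := hΓ1mem
  obtain ⟨h2n, h2r, h2c⟩ := hΓ2mem
  set G := Γ1ᵀ * Matrix.diagonal (fun t => (p0 t)⁻¹) * Γ2 with hG
  have hGentry : ∀ i j, G i j = ∑ t, Γ1 t i * (p0 t)⁻¹ * Γ2 t j := by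
    intro i j
    rw [hG, Matrix.mul_apply]
    congr 1; ext t
    rw [Matrix.mul_diagonal, Matrix.transpose_apply]
  have hGmem : G ∈ TransportPolytope p1 p2 := by
    refine ⟨fun i j => ?_, fun i => ?_, fun j => ?_⟩
    · rw [hGentry]
      exact Finset.sum_nonneg fun t _ =>
        mul_nonneg (mul_nonneg (h1n t i) (inv_nonneg.2 (hp0 t).le)) (h2n t j)
    · calc ∑ j, G i j = ∑ t, Γ1 t i * (p0 t)⁻¹ * (∑ j, Γ2 t j) := by
            simp only [hGentry, Finset.mul_sum]
            rw [Finset.sum_comm]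
      _ = ∑ t, Γ1 t i := by
            refine Finset.sum_congr rfl fun t _ => ?_
            rw [h2r t, mul_assoc]
            field_simp
            exact mul_div_cancel_right₀ _ (hp0 t).ne'
      _ = p1 i := h1c i
    · calc ∑ i, G i j = ∑ t, (∑ i, Γ1 t i) * (p0 t)⁻¹ * Γ2 t j := by
            simp only [hGentry]
            rw [Finset.sum_comm]
            simp [Finset.sum_mul]
      _ = ∑ t, Γ2 t j := by
            refine Finset.sum_congr rfl fun t _ => ?_
            rw [h1r t]
            rw [mul_comm, ← mul_assoc]
            field_simp
            exact mul_div_cancel_right₀ _ (hp0 t).ne'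
      _ = p2 j := h2c j
  have hGrank : NonnegRankLE G r := by
    refine ⟨fun t i => Γ1 t i * (p0 t)⁻¹, fun t j => Γ2 t j,
      fun t i => mul_nonneg (h1n t i) (inv_nonneg.2 (hp0 t).le), fun t j => h2n t j,
      fun i j => ?_⟩
    rw [hGentry]
  refine ⟨hGmem, hGrank, ?_⟩
  set C : Matrix (Fin n) (Fin m) ℝ := Matrix.of fun i j => c (x i) (y j) with hC
  have hbdd : BddBelow ((fun Γ => EOTObj C Γ ε) ''
      {Γ ∈ TransportPolytope p1 p2 | NonnegRankLE Γ r}) := by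
    refine ⟨(-∑ i, ∑ j, |C i j|) - ε * (n * m), ?_⟩
    rintro v ⟨Γ, ⟨⟨hΓn, hΓr, _⟩, _⟩, rfl⟩
    refine EOTObj_lb C ε hε Γ hΓn fun i j => ?_
    have : Γ i j ≤ ∑ j', Γ i j' := Finset.single_le_sum (fun j' _ => hΓn i j') (Finset.mem_univ j)
    calc Γ i j ≤ p1 i := by rw [← hΓr i]; exact this
    _ ≤ ∑ i', p1 i' := Finset.single_le_sum (fun i' _ => (hp1 i').le) (Finset.mem_univ i)
    _ = 1 := hp1s
  exact csInf_le hbdd ⟨G, ⟨hGmem, hGrank⟩, rfl⟩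
end

section
/- Every coupling of the form Γ = (Γ¹)ᵀ Diag(σ)⁻¹ Γ² with Γ¹ ∈ U(σ, p¹), Γ² ∈ U(σ, p²), and σ ∈ Δ_r strictly positive, lies in U(p¹, p²) and has nonnegative rank at most r. -/
open Matrix Finset

lemma glued_entry {n m r : ℕ} (σ : Fin r → ℝ)
    (Γ1 : Matrix (Fin r) (Fin n) ℝ) (Γ2 : Matrix (Fin r) (Fin m) ℝ)
    (i : Fin n) (j : Fin m) :
    (Γ1ᵀ * Matrix.diagonal (fun t => (σ t)⁻¹) * Γ2) i j
      = ∑ t, Γ1 t i * (σ t)⁻¹ * Γ2 t j := by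
  rw [Matrix.mul_apply]
  simp [Matrix.mul_diagonal, Matrix.transpose_apply]

/-- every coupling `Γ = (Γ1)ᵀ Diag(σ)⁻¹ Γ2` with
`Γ1 ∈ U(σ,p1)`, `Γ2 ∈ U(σ,p2)` and `σ ∈ Δ_r` strictly positive lies in
`U(p1,p2)` and has nonnegative rank at most `r`. -/
theorem glued_coupling_mem_and_nonneg_rank
    (n m r : ℕ)
    (p1 : Fin n → ℝ) (p2 : Fin m → ℝ) (σ : Fin r → ℝ)
    (hσpos : ∀ t, 0 < σ t) (hσsum : ∑ t, σ t = 1)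
    (Γ1 : Matrix (Fin r) (Fin n) ℝ) (Γ2 : Matrix (Fin r) (Fin m) ℝ)
    (hΓ1nonneg : ∀ t i, 0 ≤ Γ1 t i)
    (hΓ1rows : ∀ t, ∑ i, Γ1 t i = σ t) (hΓ1cols : ∀ i, ∑ t, Γ1 t i = p1 i)
    (hΓ2nonneg : ∀ t j, 0 ≤ Γ2 t j)
    (hΓ2rows : ∀ t, ∑ j, Γ2 t j = σ t) (hΓ2cols : ∀ j, ∑ t, Γ2 t j = p2 j) :
    (∀ i j, 0 ≤ (Γ1ᵀ * Matrix.diagonal (fun t => (σ t)⁻¹) * Γ2) i j) ∧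
    (∀ i, ∑ j, (Γ1ᵀ * Matrix.diagonal (fun t => (σ t)⁻¹) * Γ2) i j = p1 i) ∧
    (∀ j, ∑ i, (Γ1ᵀ * Matrix.diagonal (fun t => (σ t)⁻¹) * Γ2) i j = p2 j) ∧
    NonnegRankLE (Γ1ᵀ * Matrix.diagonal (fun t => (σ t)⁻¹) * Γ2) r := by
  refine ⟨?_, ?_, ?_, ?_⟩
  · intro i j
    rw [glued_entry]
    exact Finset.sum_nonneg fun t _ =>
      mul_nonneg (mul_nonneg (hΓ1nonneg t i) (inv_nonneg.2 (hσpos t).le)) (hΓ2nonneg t j)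
  · intro i
    simp only [glued_entry]
    rw [Finset.sum_comm]
    calc ∑ t, ∑ j, Γ1 t i * (σ t)⁻¹ * Γ2 t j
        = ∑ t, Γ1 t i * (σ t)⁻¹ * σ t := by
          simp only [← Finset.mul_sum, hΓ2rows]
      _ = ∑ t, Γ1 t i := by
          refine Finset.sum_congr rfl fun t _ => ?_
          rw [mul_assoc, inv_mul_cancel₀ (hσpos t).ne', mul_one]
      _ = p1 i := hΓ1cols i
  · intro j
    simp only [glued_entry]
    rw [Finset.sum_comm]
    calc ∑ t, ∑ i, Γ1 t i * (σ t)⁻¹ * Γ2 t j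
        = ∑ t, σ t * (σ t)⁻¹ * Γ2 t j := by
          refine Finset.sum_congr rfl fun t _ => ?_
          rw [← Finset.sum_mul, ← Finset.sum_mul, hΓ1rows]
      _ = ∑ t, Γ2 t j := by
          refine Finset.sum_congr rfl fun t _ => ?_
          rw [mul_inv_cancel₀ (hσpos t).ne', one_mul]
      _ = p2 j := hΓ2cols j
  · refine ⟨fun t i => Γ1 t i * (σ t)⁻¹, fun t j => Γ2 t j, ?_, ?_, ?_⟩
    · exact fun t i => mul_nonneg (hΓ1nonneg t i) (inv_nonneg.2 (hσpos t).le)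
    · exact fun t j => hΓ2nonneg t j
    · intro i j; rw [glued_entry]
end

section
/- Conversely (Cohen–Rothblum type factorization): any Γ ∈ U(p¹, p²) with nonnegative rank at most r can be written as Γ = (Γ¹)ᵀ Diag(σ)⁻¹ Γ² for some σ ∈ Δ_r with strictly positive entries, Γ¹ ∈ U(σ, p¹), and Γ² ∈ U(σ, p²). -/
open Matrix Finset

/-!
Write `Γ = ∑ₜ aₜ bₜᵀ` and let `Aₜ`, `Bₜ` be the total masses of `aₜ`, `bₜ`. Taking `σₜ = Aₜ Bₜ`,
`Γ¹` with rows `Bₜ aₜ` and `Γ²` with rows `Aₜ bₜ` works, because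
`Diag(B) Diag(σ)⁻¹ Diag(A) = 1` and the marginals of `Γ¹`, `Γ²` are those of `σ` and `Γ`.
This needs every term to have positive mass. A term of zero mass vanishes, so the zero-mass terms
together with one term of positive mass (there is one since `Γ ≠ 0`) can all be replaced by equal
shares of the latter.
-/

section NonnegFactorization

variable {ι α β : Type*} [Fintype ι]

theorem sum_diagonal_mul_apply {R : Type*} [CommSemiring R] [Fintype α] [DecidableEq ι]
    (v : ι → R) (a : Matrix ι α R) (t : ι) : ∑ i, (diagonal v * a) t i = v t * ∑ i, a t i := by
  simp only [diagonal_mul, mul_sum]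

theorem sum_diagonal_sum_mul_apply {R : Type*} [CommSemiring R] [Fintype β] [DecidableEq ι]
    (a : Matrix ι α R) (b : Matrix ι β R) (i : α) :
    ∑ t, (diagonal (fun t => ∑ j, b t j) * a) t i = ∑ j, (aᵀ * b) i j := by
  simp only [diagonal_mul]
  simp only [mul_apply, transpose_apply, sum_mul]
  rw [sum_comm]
  exact sum_congr rfl fun j _ => sum_congr rfl fun t _ => mul_comm _ _

theorem transpose_diagonal_mul_diagonal_inv_mul {K : Type*} [Field K] [DecidableEq ι]
    (a : Matrix ι α K) (b : Matrix ι β K) {u v : ι → K} (hu : ∀ t, u t ≠ 0) (hv : ∀ t, v t ≠ 0) :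
    (diagonal v * a)ᵀ * diagonal (fun t => (u t * v t)⁻¹) * (diagonal u * b) = aᵀ * b := by
  have hdiag : diagonal v * diagonal (fun t => (u t * v t)⁻¹) * diagonal u = 1 := by
    rw [diagonal_mul_diagonal, diagonal_mul_diagonal, ← diagonal_one]
    exact congrArg diagonal (funext fun t => by field_simp [hu t, hv t])
  calc _ = aᵀ * (diagonal v * diagonal (fun t => (u t * v t)⁻¹) * diagonal u) * b := by
        simp only [transpose_mul, diagonal_transpose, Matrix.mul_assoc]
    _ = aᵀ * b := by rw [hdiag, Matrix.mul_one]

variable {𝕜 : Type*} [Field 𝕜] [LinearOrder 𝕜] [IsStrictOrderedRing 𝕜]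

theorem mul_eq_zero_of_sum_mul_sum_eq_zero [Fintype α] [Fintype β] {f : α → 𝕜} {g : β → 𝕜}
    (hf : ∀ i, 0 ≤ f i) (hg : ∀ j, 0 ≤ g j) (h : (∑ i, f i) * (∑ j, g j) = 0) (i : α) (j : β) :
    f i * g j = 0 := by
  rcases mul_eq_zero.mp h with h | h
  · rw [(sum_eq_zero_iff_of_nonneg fun i _ => hf i).mp h i (mem_univ i), zero_mul]
  · rw [(sum_eq_zero_iff_of_nonneg fun j _ => hg j).mp h j (mem_univ j), mul_zero]

theorem exists_nonneg_factors_with_pos_sums [Fintype α] [Fintype β]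
    (a : Matrix ι α 𝕜) (b : Matrix ι β 𝕜) (ha : ∀ t i, 0 ≤ a t i) (hb : ∀ t j, 0 ≤ b t j)
    (hab : aᵀ * b ≠ 0) :
    ∃ (a' : Matrix ι α 𝕜) (b' : Matrix ι β 𝕜), (∀ t i, 0 ≤ a' t i) ∧ (∀ t j, 0 ≤ b' t j) ∧
      (∀ t, 0 < ∑ i, a' t i) ∧ (∀ t, 0 < ∑ j, b' t j) ∧ a'ᵀ * b' = aᵀ * b := by
  classical
  set A : ι → 𝕜 := fun t => ∑ i, a t i
  set B : ι → 𝕜 := fun t => ∑ j, b t j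
  have hAB_pos {t : ι} (h : A t * B t ≠ 0) : 0 < A t ∧ 0 < B t :=
    ⟨(sum_nonneg fun i _ => ha t i).lt_of_ne (left_ne_zero_of_mul h).symm,
      (sum_nonneg fun j _ => hb t j).lt_of_ne (right_ne_zero_of_mul h).symm⟩
  obtain ⟨t₀, ht₀⟩ : ∃ t₀, A t₀ * B t₀ ≠ 0 := by
    by_contra! h
    refine hab (Matrix.ext fun i j => ?_)
    simp only [mul_apply, transpose_apply, Matrix.zero_apply]
    exact sum_eq_zero fun t _ =>
      mul_eq_zero_of_sum_mul_sum_eq_zero (ha t) (hb t) (h t) i j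
  set P : ι → Prop := fun t => A t * B t = 0 ∨ t = t₀
  have hPt₀ : t₀ ∈ univ.filter P := mem_filter.mpr ⟨mem_univ _, Or.inr rfl⟩
  set k : 𝕜 := (#(univ.filter P) : 𝕜)
  have hk : 0 < k := Nat.cast_pos.mpr (card_pos.mpr ⟨t₀, hPt₀⟩)
  refine ⟨of fun t i => if P t then k⁻¹ * a t₀ i else a t i,
    of fun t j => if P t then b t₀ j else b t j, ?_, ?_, ?_, ?_, ?_⟩
  · intro t i
    simp only [of_apply]
    split_ifs
    exacts [mul_nonneg (inv_nonneg.mpr hk.le) (ha t₀ i), ha t i]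
  · intro t j
    simp only [of_apply]
    split_ifs
    exacts [hb t₀ j, hb t j]
  · intro t
    simp only [of_apply]
    split_ifs with ht
    · simpa only [← mul_sum] using mul_pos (inv_pos.mpr hk) (hAB_pos ht₀).1
    · exact (hAB_pos (not_or.mp ht).1).1
  · intro t
    simp only [of_apply]
    split_ifs with ht
    exacts [(hAB_pos ht₀).2, (hAB_pos (not_or.mp ht).1).2]
  · ext i j
    have hP : ∑ t ∈ univ.filter P, a t i * b t j = a t₀ i * b t₀ j := by
      refine sum_eq_single_of_mem t₀ hPt₀ fun t ht hne => ?_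
      exact mul_eq_zero_of_sum_mul_sum_eq_zero (ha t) (hb t)
        ((mem_filter.mp ht).2.resolve_right hne) i j
    simp only [mul_apply, transpose_apply, of_apply]
    calc ∑ t, (if P t then k⁻¹ * a t₀ i else a t i) * (if P t then b t₀ j else b t j)
        = ∑ t, if P t then k⁻¹ * (a t₀ i * b t₀ j) else a t i * b t j :=
          sum_congr rfl fun t _ => by split_ifs <;> ring
      _ = a t₀ i * b t₀ j + ∑ t ∈ univ.filter (¬P ·), a t i * b t j := by
          rw [sum_ite, sum_const, nsmul_eq_mul, ← mul_assoc, mul_inv_cancel₀ hk.ne', one_mul]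
      _ = ∑ t, a t i * b t j := by rw [← hP, sum_filter_add_sum_filter_not]

end NonnegFactorization

theorem cohen_rothblum_factorization_general
    (n m r : ℕ)
    (p1 : Fin n → ℝ) (p2 : Fin m → ℝ)
    (hp1sum : ∑ i, p1 i = 1)
    (Γ : Matrix (Fin n) (Fin m) ℝ)
    (hΓrows : ∀ i, ∑ j, Γ i j = p1 i) (hΓcols : ∀ j, ∑ i, Γ i j = p2 j)
    (a : Fin r → Fin n → ℝ) (b : Fin r → Fin m → ℝ)
    (ha : ∀ t i, 0 ≤ a t i) (hb : ∀ t j, 0 ≤ b t j)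
    (hfac : ∀ i j, Γ i j = ∑ t, a t i * b t j) :
    ∃ (σ : Fin r → ℝ) (Γ1 : Matrix (Fin r) (Fin n) ℝ)
      (Γ2 : Matrix (Fin r) (Fin m) ℝ),
      (∀ t, 0 < σ t) ∧ (∑ t, σ t = 1) ∧
      (∀ t i, 0 ≤ Γ1 t i) ∧ (∀ t, ∑ i, Γ1 t i = σ t) ∧ (∀ i, ∑ t, Γ1 t i = p1 i) ∧
      (∀ t j, 0 ≤ Γ2 t j) ∧ (∀ t, ∑ j, Γ2 t j = σ t) ∧ (∀ j, ∑ t, Γ2 t j = p2 j) ∧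
      Γ = Γ1ᵀ * Matrix.diagonal (fun t => (σ t)⁻¹) * Γ2 := by
  have hΓab : Γ = (of a)ᵀ * of b := by
    ext i j
    simp only [hfac, mul_apply, transpose_apply, of_apply]
  have hΓ0 : Γ ≠ 0 := by
    rintro rfl
    simp [← hΓrows] at hp1sum
  obtain ⟨a', b', ha', hb', hA, hB, hab⟩ :=
    exists_nonneg_factors_with_pos_sums (of a) (of b) ha hb (hΓab ▸ hΓ0)
  rw [← hab] at hΓab
  set A : Fin r → ℝ := fun t => ∑ i, a' t i
  set B : Fin r → ℝ := fun t => ∑ j, b' t j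
  have hrow1 (t) : ∑ i, (diagonal B * a') t i = A t * B t :=
    (sum_diagonal_mul_apply B a' t).trans (mul_comm _ _)
  have hcol1 (i) : ∑ t, (diagonal B * a') t i = p1 i := by
    rw [sum_diagonal_sum_mul_apply, ← hΓab, hΓrows]
  have hcol2 (j) : ∑ t, (diagonal A * b') t j = p2 j := by
    rw [sum_diagonal_sum_mul_apply, ← hΓcols, hΓab]
    simp only [mul_apply, transpose_apply, mul_comm]
  refine ⟨fun t => A t * B t, diagonal B * a', diagonal A * b', fun t => mul_pos (hA t) (hB t),
    ?_, fun t i => ?_, hrow1, hcol1, fun t j => ?_, sum_diagonal_mul_apply A b', hcol2,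
    hΓab.trans (transpose_diagonal_mul_diagonal_inv_mul a' b'
      (fun t => (hA t).ne') (fun t => (hB t).ne')).symm⟩
  · simp only [← hrow1]
    exact sum_comm.trans (by simp only [hcol1, hp1sum])
  · simpa only [diagonal_mul] using mul_nonneg (hB t).le (ha' t i)
  · simpa only [diagonal_mul] using mul_nonneg (hA t).le (hb' t j)

/-- Cohen–Rothblum type factorization: any `Γ ∈ U(p1,p2)` with
nonnegative rank at most `r` factors as `Γ = (Γ1)ᵀ Diag(σ)⁻¹ Γ2` with
`σ ∈ Δ_r` strictly positive, `Γ1 ∈ U(σ,p1)`, `Γ2 ∈ U(σ,p2)`. -/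
theorem cohen_rothblum_factorization
    (n m r : ℕ)
    (p1 : Fin n → ℝ) (p2 : Fin m → ℝ)
    (hp1pos : ∀ i, 0 < p1 i) (hp2pos : ∀ j, 0 < p2 j)
    (hp1sum : ∑ i, p1 i = 1) (hp2sum : ∑ j, p2 j = 1)
    (Γ : Matrix (Fin n) (Fin m) ℝ)
    (hΓnonneg : ∀ i j, 0 ≤ Γ i j)
    (hΓrows : ∀ i, ∑ j, Γ i j = p1 i) (hΓcols : ∀ j, ∑ i, Γ i j = p2 j)
    (a : Fin r → Fin n → ℝ) (b : Fin r → Fin m → ℝ)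
    (ha : ∀ t i, 0 ≤ a t i) (hb : ∀ t j, 0 ≤ b t j)
    (hfac : ∀ i j, Γ i j = ∑ t, a t i * b t j) :
    ∃ (σ : Fin r → ℝ) (Γ1 : Matrix (Fin r) (Fin n) ℝ)
      (Γ2 : Matrix (Fin r) (Fin m) ℝ),
      (∀ t, 0 < σ t) ∧ (∑ t, σ t = 1) ∧
      (∀ t i, 0 ≤ Γ1 t i) ∧ (∀ t, ∑ i, Γ1 t i = σ t) ∧ (∀ i, ∑ t, Γ1 t i = p1 i) ∧
      (∀ t j, 0 ≤ Γ2 t j) ∧ (∀ t, ∑ j, Γ2 t j = σ t) ∧ (∀ j, ∑ t, Γ2 t j = p2 j) ∧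
      Γ = Γ1ᵀ * Matrix.diagonal (fun t => (σ t)⁻¹) * Γ2 :=
  cohen_rothblum_factorization_general n m r p1 p2 hp1sum Γ hΓrows hΓcols a b ha hb hfac
end
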